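/- Let K be a field of characteristic p > 0 with a non-Archimedean absolute value, and λ ∈ K with |λ| = 1 and |1 - λ| < 1. Then for every integer N ≥ 1, the product ∏_{i=1}^{p^{N-1}} |1 - λ^{i·p}| equals |1 - λ|^{p^N · ((p-1)/p · (N-1) + 1)}. -/

import Mathlib

/-!
In characteristic `p` we have `1 - λ ^ (a * p) = (1 - λ ^ a) ^ p`. For `p ∤ a` the geometric sum
`1 + λ + ⋯ + λ ^ (a - 1)` lies within `‖1 - λ‖ < 1` of the integer `a`, whose norm is `1` since
it is a root of unity in `𝔽_p`; so `‖1 - λ ^ a‖ = ‖1 - λ‖`. Sorting `i ≤ p ^ (M + 1)` by whether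
`p ∣ i` turns the product `P M` over `i ≤ p ^ M` into
`P (M + 1) = P M ^ p * ‖1 - λ‖ ^ (p * (p - 1) * p ^ M)`, which is solved by the natural exponent
`p ^ M * ((p - 1) * M + p) = p ^ (M + 1) * ((p - 1) / p * M + 1)`.
-/

open Finset

section Ultrametric

variable {K : Type*} [NormedField K] [IsUltrametricDist K] {lam : K}

lemma norm_le_one_of_norm_one_sub_le_one (h : ‖1 - lam‖ ≤ 1) : ‖lam‖ ≤ 1 := by
  simpa using (IsUltrametricDist.norm_add_le_max 1 (-(1 - lam))).trans
    (by simpa [norm_sub_rev] using h)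

lemma norm_one_sub_pow_le (hlam : ‖lam‖ ≤ 1) (n : ℕ) : ‖1 - lam ^ n‖ ≤ ‖1 - lam‖ := by
  have hsum : ‖∑ i ∈ range n, lam ^ i‖ ≤ 1 :=
    IsUltrametricDist.norm_sum_le_of_forall_le_of_nonneg zero_le_one fun i _ => by
      simpa [norm_pow] using pow_le_one₀ (norm_nonneg lam) hlam
  rw [← mul_neg_geom_sum, norm_mul]
  exact mul_le_of_le_one_right (norm_nonneg _) hsum

lemma norm_geom_sum_sub_natCast_le (hlam : ‖lam‖ ≤ 1) (n : ℕ) :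
    ‖∑ i ∈ range n, lam ^ i - n‖ ≤ ‖1 - lam‖ := by
  have hsplit : ∑ i ∈ range n, lam ^ i - n = ∑ i ∈ range n, -(1 - lam ^ i) := by
    simp [sum_sub_distrib]
  rw [hsplit]
  exact IsUltrametricDist.norm_sum_le_of_forall_le_of_nonneg (norm_nonneg _) fun i _ => by
    simpa only [norm_neg] using norm_one_sub_pow_le hlam i

end Ultrametric

lemma norm_natCast_eq_one_of_not_dvd {K : Type*} [NormedField K] {p : ℕ} (hp : p.Prime)
    [CharP K p] {a : ℕ} (ha : ¬ p ∣ a) : ‖(a : K)‖ = 1 := by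
  have := Fact.mk hp
  have hunit : (a : ZMod p) ^ (p - 1) = 1 :=
    ZMod.pow_card_sub_one_eq_one (by rwa [Ne, ZMod.natCast_eq_zero_iff])
  refine IsOfFinOrder.norm_eq_one
    (isOfFinOrder_iff_pow_eq_one.2 ⟨p - 1, Nat.sub_pos_of_lt hp.one_lt, ?_⟩)
  simpa using congrArg (ZMod.castHom (dvd_refl p) K) hunit

lemma norm_one_sub_pow_mul_expChar {K : Type*} [NormedField K] {p : ℕ} [ExpChar K p]
    (lam : K) (n : ℕ) : ‖1 - lam ^ (n * p)‖ = ‖1 - lam ^ n‖ ^ p := by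
  rw [← norm_pow, sub_pow_expChar, one_pow, pow_mul]

section CharP

variable {K : Type*} [NormedField K] [IsUltrametricDist K] {p : ℕ} [CharP K p] {lam : K}

lemma norm_geom_sum_eq_one_of_not_dvd (hp : p.Prime) (hsmall : ‖1 - lam‖ < 1) {a : ℕ}
    (ha : ¬ p ∣ a) : ‖∑ i ∈ range a, lam ^ i‖ = 1 := by
  have hcast := norm_natCast_eq_one_of_not_dvd (K := K) hp ha
  have hdiff : ‖∑ i ∈ range a, lam ^ i - a‖ < ‖(a : K)‖ := hcast ▸
    (norm_geom_sum_sub_natCast_le (norm_le_one_of_norm_one_sub_le_one hsmall.le) a).trans_lt hsmall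
  rw [← add_sub_cancel (a : K) (∑ i ∈ range a, lam ^ i),
    IsUltrametricDist.norm_add_eq_max_of_norm_ne_norm hdiff.ne', max_eq_left hdiff.le, hcast]

lemma norm_one_sub_pow_of_not_dvd (hp : p.Prime) (hsmall : ‖1 - lam‖ < 1) {a : ℕ}
    (ha : ¬ p ∣ a) : ‖1 - lam ^ a‖ = ‖1 - lam‖ := by
  rw [← mul_neg_geom_sum, norm_mul, norm_geom_sum_eq_one_of_not_dvd hp hsmall ha, mul_one]

end CharP

lemma Finset.prod_Icc_one_mul_eq_prod_mul_prod_not_dvd {M : Type*} [CommMonoid M] (f : ℕ → M)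
    {p : ℕ} (hp : 0 < p) (m : ℕ) :
    ∏ i ∈ Icc 1 (p * m), f i =
      (∏ k ∈ Icc 1 m, f (p * k)) * ∏ i ∈ Icc 1 (p * m) with ¬ p ∣ i, f i := by
  rw [← prod_filter_mul_prod_filter_not (Icc 1 (p * m)) (p ∣ ·)]
  congr 1
  refine (prod_nbij' (p * ·) (· / p) ?_ ?_ ?_ ?_ fun _ _ => rfl).symm
  all_goals intro i hi; simp only [mem_filter, mem_Icc] at hi ⊢
  · exact ⟨⟨Nat.mul_pos hp hi.1, Nat.mul_le_mul_left p hi.2⟩, dvd_mul_right p i⟩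
  · obtain ⟨⟨h1, h2⟩, k, rfl⟩ := hi
    rw [Nat.mul_div_cancel_left k hp]
    exact ⟨Nat.pos_of_mul_pos_left h1, Nat.le_of_mul_le_mul_left h2 hp⟩
  · exact Nat.mul_div_cancel_left i hp
  · exact Nat.mul_div_cancel' hi.2

lemma Nat.card_Icc_one_mul_filter_not_dvd {p : ℕ} (hp : 0 < p) (m : ℕ) :
    #{i ∈ Icc 1 (p * m) | ¬ p ∣ i} = (p - 1) * m := by
  have hdvd : #{i ∈ Icc 1 (p * m) | p ∣ i} = m := by
    rw [← zero_add 1, Icc_add_one_left_eq_Ioc, Nat.Ioc_filter_dvd_card_eq_div,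
      Nat.mul_div_cancel_left _ hp]
  have htotal := card_filter_add_card_filter_not (s := Icc 1 (p * m)) (p ∣ ·)
  rw [hdvd, Nat.card_Icc, Nat.add_sub_cancel] at htotal
  rw [Nat.sub_mul, one_mul]
  omega

lemma prod_Icc_norm_one_sub_pow_mul_char {K : Type*} [NormedField K] [IsUltrametricDist K] {p : ℕ}
    (hp : p.Prime) [CharP K p] {lam : K} (hsmall : ‖1 - lam‖ < 1) (M : ℕ) :
    ∏ i ∈ Icc 1 (p ^ M), ‖1 - lam ^ (i * p)‖ = ‖1 - lam‖ ^ (p ^ M * ((p - 1) * M + p)) := by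
  have := ExpChar.prime (R := K) hp
  induction M with
  | zero => simp [norm_one_sub_pow_mul_expChar]
  | succ M ih =>
    have hmul (k : ℕ) : ‖1 - lam ^ (p * k * p)‖ = ‖1 - lam ^ (k * p)‖ ^ p := by
      rw [mul_comm p k, ← norm_one_sub_pow_mul_expChar]
    have hcoprime (i : ℕ) (hi : ¬ p ∣ i) : ‖1 - lam ^ (i * p)‖ = ‖1 - lam‖ ^ p := by
      rw [norm_one_sub_pow_mul_expChar, norm_one_sub_pow_of_not_dvd hp hsmall hi]
    rw [pow_succ', prod_Icc_one_mul_eq_prod_mul_prod_not_dvd _ hp.pos,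
      prod_congr rfl fun i hi => hcoprime i (mem_filter.1 hi).2, prod_const,
      Nat.card_Icc_one_mul_filter_not_dvd hp.pos, prod_congr rfl fun k _ => hmul k,
      prod_pow, ih, ← pow_mul, ← pow_mul, ← pow_add]
    congr 1
    ring

theorem prod_small_divisors_general {K : Type*} [NontriviallyNormedField K] [IsUltrametricDist K]
    (p : ℕ) (hp : p.Prime) [CharP K p]
    (lam : K) (hsmall : ‖1 - lam‖ < 1) :
    ∀ N : ℕ, 1 ≤ N →
      ∏ i ∈ Finset.Icc 1 (p ^ (N - 1)), ‖1 - lam ^ (i * p)‖ =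
        ‖1 - lam‖ ^ ((p : ℝ) ^ N * (((p : ℝ) - 1) / p * ((N : ℝ) - 1) + 1)) := by
  intro N hN
  obtain ⟨M, rfl⟩ := Nat.exists_eq_add_of_le' hN
  rw [Nat.add_sub_cancel, prod_Icc_norm_one_sub_pow_mul_char hp hsmall, ← Real.rpow_natCast]
  congr 1
  have hp0 : (p : ℝ) ≠ 0 := Nat.cast_ne_zero.2 hp.ne_zero
  push_cast [Nat.cast_sub hp.one_le]
  field_simp
  ring

/-- Let `K` be a field of characteristic `p > 0` with a non-Archimedean absolute value and
`λ ∈ K` with `‖λ‖ = 1`, `λ` not a root of unity, and `‖1 - λ‖ < 1`.  Then for every `N ≥ 1`,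
`∏_{i=1}^{p^{N-1}} ‖1 - λ^{i·p}‖ = ‖1 - λ‖ ^ (p^N ((p-1)/p (N-1) + 1))`. -/
theorem prod_small_divisors {K : Type*} [NontriviallyNormedField K] [IsUltrametricDist K]
    (p : ℕ) (hp : p.Prime) [CharP K p]
    (lam : K) (hlam : ‖lam‖ = 1) (hroot : ∀ n : ℕ, 1 ≤ n → lam ^ n ≠ 1)
    (hsmall : ‖1 - lam‖ < 1) :
    ∀ N : ℕ, 1 ≤ N →
      ∏ i ∈ Finset.Icc 1 (p ^ (N - 1)), ‖1 - lam ^ (i * p)‖ =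
        ‖1 - lam‖ ^ ((p : ℝ) ^ N * (((p : ℝ) - 1) / p * ((N : ℝ) - 1) + 1)) :=
  prod_small_divisors_general p hp lam hsmall
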